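/- Let X be a compact plane set and let x ∈ X. Suppose there is an open neighbourhood U of x in X such that every point of U \ {x} is an R-point for R(X). Then x is a point of continuity for R(X). -/

import Mathlib

open Metric MeasureTheory Set

noncomputable section

/-- Membership in the uniform algebra `R(X)`: `f` is continuous on `X` and is a uniform
limit on `X` of rational functions with no poles on `X`. -/
def RMem (X : Set ℂ) (f : ℂ → ℂ) : Prop :=
  ContinuousOn f X ∧ ∀ ε : ℝ, 0 < ε → ∃ p q : Polynomial ℂ,
    (∀ z ∈ X, q.eval z ≠ 0) ∧ ∀ z ∈ X, ‖f z - p.eval z / q.eval z‖ < ε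

/-- The ideal `M_x` of functions in `R(X)` vanishing at `x`. -/
def Mideal (X : Set ℂ) (x : ℂ) : Set (ℂ → ℂ) := {f | RMem X f ∧ f x = 0}

/-- The ideal `J_x` of functions in `R(X)` vanishing on a neighbourhood of `x` in `X`. -/
def Jideal (X : Set ℂ) (x : ℂ) : Set (ℂ → ℂ) :=
  {f | RMem X f ∧ ∃ U : Set ℂ, IsOpen U ∧ x ∈ U ∧ ∀ z ∈ X ∩ U, f z = 0}

/-- `x` is a point of continuity for `R(X)`: for every `y ∈ X \ {x}`, `J_y ⊄ M_x`. -/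
def PointOfContinuity (X : Set ℂ) (x : ℂ) : Prop :=
  ∀ y ∈ X, y ≠ x → ¬ (Jideal X y ⊆ Mideal X x)

/-- `x` is an R-point for `R(X)`: for every `y ∈ X \ {x}`, `J_x ⊄ M_y`. -/
def RPoint (X : Set ℂ) (x : ℂ) : Prop :=
  ∀ y ∈ X, y ≠ x → ¬ (Jideal X x ⊆ Mideal X y)

/-!
For `y ∈ U` the claim is the R-point property of `y`. For `y ∉ U`, take a closed annulus `K`
around `x` inside `U \ {x}`. By compactness, a finite product of functions from the ideals
`J_z`, `z ∈ K`, gives `F ∈ R(X)` with `F x ≠ 0` and `F = 0` on `X ∩ K`. Cut off at the outer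
circle of `K`, `F` becomes a function in `J_y \ M_x`, provided it stays in `R(X)`. It does: it is
the uniform limit on `X` of `F · wⁿ / ((ζ - x)ⁿ + wⁿ)` with `‖w‖` inside the annulus, and the
poles `x + w ξ` (`ξⁿ = -1`) can be kept off `X` because, by the identity theorem, a set of
R-points has empty interior.
-/

open Filter Topology Polynomial

section RationalApproximation

variable {X : Set ℂ}

theorem rMem_div (p q : Polynomial ℂ) (hq : ∀ z ∈ X, q.eval z ≠ 0) :
    RMem X fun z => p.eval z / q.eval z :=
  ⟨p.continuous.continuousOn.div q.continuous.continuousOn hq,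
    fun ε hε => ⟨p, q, hq, fun z _ => by simpa using hε⟩⟩

theorem rMem_one : RMem X 1 := by
  simpa [Pi.one_def] using rMem_div (X := X) 1 1 (by simp)

theorem rMem_pow_div_pow_add_pow {x w : ℂ} {n : ℕ} (hw : ∀ ζ ∈ X, (ζ - x) ^ n + w ^ n ≠ 0) :
    RMem X fun ζ => w ^ n / ((ζ - x) ^ n + w ^ n) := by
  have hq : ∀ ζ ∈ X, ((Polynomial.X - C x) ^ n + C (w ^ n)).eval ζ ≠ 0 := by
    simpa only [eval_add, eval_pow, eval_sub, eval_X, eval_C] using hw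
  simpa only [eval_add, eval_pow, eval_sub, eval_X, eval_C] using rMem_div (C (w ^ n)) _ hq

theorem RMem.exists_tendstoUniformlyOn {f : ℂ → ℂ} (hf : RMem X f) :
    ∃ p q : ℕ → Polynomial ℂ, (∀ k, ∀ z ∈ X, (q k).eval z ≠ 0) ∧
      TendstoUniformlyOn (fun k z => (p k).eval z / (q k).eval z) f atTop X := by
  choose p q hq happrox using fun k : ℕ => hf.2 (1 / (k + 1)) Nat.one_div_pos_of_nat
  refine ⟨p, q, hq, Metric.tendstoUniformlyOn_iff.2 fun ε hε => ?_⟩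
  obtain ⟨N, hN⟩ := exists_nat_one_div_lt hε
  filter_upwards [eventually_ge_atTop N] with k hk z hz
  rw [dist_eq_norm]
  calc _ < 1 / ((k : ℝ) + 1) := happrox k z hz
    _ ≤ 1 / ((N : ℝ) + 1) := Nat.one_div_le_one_div hk
    _ < ε := hN

theorem rMem_of_tendstoUniformlyOn {f : ℂ → ℂ} {p q : ℕ → Polynomial ℂ}
    (hq : ∀ k, ∀ z ∈ X, (q k).eval z ≠ 0)
    (hlim : TendstoUniformlyOn (fun k z => (p k).eval z / (q k).eval z) f atTop X) :
    RMem X f := by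
  refine ⟨hlim.continuousOn (Frequently.of_forall fun k => (rMem_div _ _ (hq k)).1),
    fun ε hε => ?_⟩
  obtain ⟨k, hk⟩ := (Metric.tendstoUniformlyOn_iff.1 hlim ε hε).exists
  exact ⟨p k, q k, hq k, fun z hz => by simpa [dist_eq_norm] using hk z hz⟩

theorem RMem.mul (hX : IsCompact X) {f g : ℂ → ℂ} (hf : RMem X f) (hg : RMem X g) :
    RMem X (f * g) := by
  obtain ⟨p, q, hq, hpq⟩ := hf.exists_tendstoUniformlyOn
  obtain ⟨p', q', hq', hpq'⟩ := hg.exists_tendstoUniformlyOn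
  refine rMem_of_tendstoUniformlyOn (p := p * p') (q := q * q')
    (fun k z hz => by simpa using mul_ne_zero (hq k z hz) (hq' k z hz)) ?_
  have hprod := (tendstoLocallyUniformlyOn_iff_tendstoUniformlyOn_of_compact hX).1
    (hpq.tendstoLocallyUniformlyOn.mul₀ hpq'.tendstoLocallyUniformlyOn hf.1 hg.1)
  convert hprod using 1
  ext k z
  simp [div_mul_div_comm]

theorem RMem.of_forall_approx {g : ℂ → ℂ}
    (h : ∀ ε > 0, ∃ f, RMem X f ∧ ∀ z ∈ X, ‖g z - f z‖ < ε) : RMem X g := by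
  refine ⟨continuousOn_of_uniform_approx_of_continuousOn fun u hu => ?_, fun ε hε => ?_⟩
  · obtain ⟨ε, hε, hεu⟩ := Metric.mem_uniformity_dist.1 hu
    obtain ⟨f, hf, hfg⟩ := h ε hε
    exact ⟨f, hf.1, fun z hz => hεu (by simpa [dist_eq_norm] using hfg z hz)⟩
  · obtain ⟨f, hf, hfg⟩ := h (ε / 2) (half_pos hε)
    obtain ⟨p, q, hq, hpq⟩ := hf.2 (ε / 2) (half_pos hε)
    refine ⟨p, q, hq, fun z hz => ?_⟩
    calc ‖g z - p.eval z / q.eval z‖ ≤ ‖g z - f z‖ + ‖f z - p.eval z / q.eval z‖ :=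
          norm_sub_le_norm_sub_add_norm_sub _ _ _
      _ < ε / 2 + ε / 2 := add_lt_add (hfg z hz) (hpq z hz)
      _ = ε := add_halves ε

theorem RMem.differentiableOn {f : ℂ → ℂ} (hf : RMem X f) {V : Set ℂ} (hV : IsOpen V)
    (hVX : V ⊆ X) : DifferentiableOn ℂ f V := by
  obtain ⟨p, q, hq, hpq⟩ := hf.exists_tendstoUniformlyOn
  refine (hpq.mono hVX).tendstoLocallyUniformlyOn.differentiableOn
    (Eventually.of_forall fun k => ?_) hV
  exact (p k).differentiable.differentiableOn.div (q k).differentiable.differentiableOn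
    fun z hz => hq k z (hVX hz)

end RationalApproximation

theorem IsOpen.nonempty_sdiff_biUnion {α ι : Type*} [TopologicalSpace α] {A : Set α}
    {C : ι → Set α} (s : Finset ι) (hA : IsOpen A) (hne : A.Nonempty)
    (hC : ∀ i ∈ s, IsClosed (C i)) (hint : ∀ i ∈ s, interior (C i ∩ A) = ∅) :
    (A \ ⋃ i ∈ s, C i).Nonempty := by
  classical
  induction s using Finset.induction_on generalizing A with
  | empty => simpa using hne
  | insert j s _ ih =>
    have hA' : (A \ C j).Nonempty := by
      rw [nonempty_iff_ne_empty, Ne, sdiff_eq_empty]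
      intro hAC
      have hsub : A ⊆ interior (C j ∩ A) := interior_maximal (subset_inter hAC subset_rfl) hA
      rw [hint j (Finset.mem_insert_self j s)] at hsub
      exact hne.ne_empty (subset_empty_iff.1 hsub)
    have := ih (hA.sdiff (hC j (Finset.mem_insert_self j s))) hA'
      (fun i hi => hC i (Finset.mem_insert_of_mem hi))
      (fun i hi => subset_empty_iff.1 (hint i (Finset.mem_insert_of_mem hi) ▸
        interior_mono (inter_subset_inter_right _ sdiff_subset)))
    simpa [Finset.set_biUnion_insert, sdiff_sdiff] using this

theorem exists_norm_mem_Ioo_forall_pow_add_pow_ne_zero {X : Set ℂ} (hX : IsClosed X) {x : ℂ}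
    {a b : ℝ} (ha : 0 ≤ a) (hab : a < b)
    (hint : interior (X ∩ {ζ | dist ζ x ∈ Ioo a b}) = ∅) {n : ℕ} (hn : n ≠ 0) :
    ∃ w : ℂ, ‖w‖ ∈ Ioo a b ∧ ∀ ζ ∈ X, (ζ - x) ^ n + w ^ n ≠ 0 := by
  have hn' : 0 < n := Nat.pos_of_ne_zero hn
  set A : Set ℂ := {w | ‖w‖ ∈ Ioo a b}
  set C : ℂ → Set ℂ := fun ξ => {w | x + ξ * w ∈ X}
  have hint' : ∀ ξ ∈ nthRootsFinset n (-1 : ℂ), interior (C ξ ∩ A) = ∅ := by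
    intro ξ hξ
    rw [mem_nthRootsFinset hn'] at hξ
    have hξ1 : ‖ξ‖ = 1 := by
      simpa using Complex.norm_eq_one_of_pow_eq_one (n := n * 2) (by rw [pow_mul, hξ]; norm_num)
        (by omega)
    let h := (Homeomorph.mulLeft₀ ξ (norm_ne_zero_iff.1 (by simp [hξ1]))).trans
      (Homeomorph.addLeft x)
    have hpre : C ξ ∩ A = h ⁻¹' (X ∩ {ζ | dist ζ x ∈ Ioo a b}) := by
      ext w
      simp [h, C, A, dist_eq_norm, hξ1]
    rw [hpre, ← h.preimage_interior, hint, preimage_empty]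
  have hAne : A.Nonempty := ⟨((a + b) / 2 : ℝ), by
    simp only [A, mem_ofPred_eq, Complex.norm_real, Real.norm_eq_abs, mem_Ioo]
    rw [abs_of_pos (by linarith)]
    constructor <;> linarith⟩
  obtain ⟨w, hwA, hw⟩ := IsOpen.nonempty_sdiff_biUnion _ (isOpen_Ioo.preimage continuous_norm)
    hAne (fun ξ _ => hX.preimage (by fun_prop)) hint'
  have hw0 : w ≠ 0 := norm_ne_zero_iff.1 (ha.trans_lt hwA.1).ne'
  refine ⟨w, hwA, fun ζ hζ hzero => hw (mem_iUnion₂.2 ⟨(ζ - x) / w, ?_, ?_⟩)⟩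
  · rw [mem_nthRootsFinset hn', div_pow, eq_neg_of_add_eq_zero_left hzero,
      neg_div, div_self (pow_ne_zero n hw0)]
  · simpa [C, div_mul_cancel₀ _ hw0] using hζ

theorem norm_pow_div_pow_add_pow_le {u v : ℂ} {s t : ℝ} {n : ℕ} (hn : n ≠ 0) (hs : 0 ≤ s)
    (hst : s < t) (hu : ‖u‖ ≤ s) (hv : t ≤ ‖v‖) :
    ‖u ^ n / (u ^ n + v ^ n)‖ ≤ s ^ n / (t ^ n - s ^ n) := by
  have hgap : 0 < t ^ n - s ^ n := sub_pos.2 (pow_lt_pow_left₀ hst hs hn)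
  have hden : t ^ n - s ^ n ≤ ‖u ^ n + v ^ n‖ :=
    calc t ^ n - s ^ n ≤ ‖v ^ n‖ - ‖u ^ n‖ := by
          rw [norm_pow, norm_pow]
          exact sub_le_sub (pow_le_pow_left₀ (hs.trans hst.le) hv n)
            (pow_le_pow_left₀ (norm_nonneg u) hu n)
      _ ≤ ‖u ^ n + v ^ n‖ := by
          simpa [add_comm] using norm_sub_norm_le (v ^ n) (-u ^ n)
  rw [norm_div, norm_pow]
  exact div_le_div₀ (pow_nonneg hs n) (pow_le_pow_left₀ (norm_nonneg u) hu n) hgap hden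

theorem tendsto_pow_div_pow_sub_pow {s t : ℝ} (hs : 0 ≤ s) (hst : s < t) :
    Tendsto (fun n : ℕ => s ^ n / (t ^ n - s ^ n)) atTop (𝓝 0) := by
  have ht : 0 < t := hs.trans_lt hst
  have hq := tendsto_pow_atTop_nhds_zero_of_lt_one (div_nonneg hs ht.le)
    ((div_lt_one ht).2 hst)
  have hlim := hq.div (tendsto_const_nhds.sub hq) (by norm_num : (1 : ℝ) - 0 ≠ 0)
  rw [zero_div] at hlim
  refine hlim.congr fun n => ?_
  have htn : t ^ n ≠ 0 := pow_ne_zero n ht.ne'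
  simp only [Pi.div_apply, div_pow]
  field_simp

theorem exists_pow_div_pow_add_pow_approx_indicator_ball {X : Set ℂ} (hX : IsClosed X) {x : ℂ}
    {a b ε : ℝ} (ha : 0 ≤ a) (hab : a < b)
    (hint : interior (X ∩ {ζ | dist ζ x ∈ Ioo a b}) = ∅) (hε : 0 < ε) :
    ∃ (n : ℕ) (w : ℂ), (∀ ζ ∈ X, (ζ - x) ^ n + w ^ n ≠ 0) ∧ ∀ ζ ∈ X, dist ζ x ∉ Icc a b →
      ‖(ball x b).indicator 1 ζ - w ^ n / ((ζ - x) ^ n + w ^ n)‖ < ε := by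
  obtain ⟨a', haa', ha'b⟩ := exists_between hab
  obtain ⟨b', ha'b', hb'b⟩ := exists_between ha'b
  have hint' : interior (X ∩ {ζ | dist ζ x ∈ Ioo a' b'}) = ∅ :=
    subset_empty_iff.1 (hint ▸ interior_mono (inter_subset_inter_right _
      fun ζ hζ => ⟨haa'.trans hζ.1, hζ.2.trans hb'b⟩))
  have hsmall {s t : ℝ} (hs : 0 ≤ s) (hst : s < t) :
      ∀ᶠ n : ℕ in atTop, s ^ n / (t ^ n - s ^ n) < ε :=
    (tendsto_pow_div_pow_sub_pow hs hst).eventually (gt_mem_nhds hε)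
  have hb' : 0 ≤ b' := ha.trans (haa'.trans ha'b').le
  obtain ⟨n, hn, hin, hout⟩ :=
    ((eventually_ne_atTop 0).and ((hsmall ha haa').and (hsmall hb' hb'b))).exists
  obtain ⟨w, hw, hpoles⟩ := exists_norm_mem_Ioo_forall_pow_add_pow_ne_zero hX
    (ha.trans haa'.le) ha'b' hint' hn
  refine ⟨n, w, hpoles, fun ζ hζ hζK => ?_⟩
  rw [mem_Icc, not_and_or, not_le, not_le] at hζK
  rcases hζK with hζa | hζb
  · have hsplit :
        1 - w ^ n / ((ζ - x) ^ n + w ^ n) = (ζ - x) ^ n / ((ζ - x) ^ n + w ^ n) := by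
      field_simp [hpoles ζ hζ]
      ring
    rw [indicator_of_mem (mem_ball.2 (hζa.trans hab)), Pi.one_apply, hsplit]
    exact (norm_pow_div_pow_add_pow_le hn ha haa' (dist_eq_norm ζ x ▸ hζa.le) hw.1.le).trans_lt
      hin
  · rw [indicator_of_notMem (fun h => (mem_ball.1 h).not_gt hζb), zero_sub, norm_neg, add_comm]
    exact (norm_pow_div_pow_add_pow_le hn hb' hb'b hw.2.le
      (dist_eq_norm ζ x ▸ hζb.le)).trans_lt hout

theorem RMem.indicator_ball {X : Set ℂ} (hX : IsCompact X) {F : ℂ → ℂ} (hF : RMem X F)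
    {x : ℂ} {a b : ℝ} (ha : 0 ≤ a) (hab : a < b)
    (hint : interior (X ∩ {ζ | dist ζ x ∈ Ioo a b}) = ∅)
    (hF0 : EqOn F 0 (X ∩ {ζ | dist ζ x ∈ Icc a b})) :
    RMem X ((ball x b).indicator F) := by
  obtain ⟨M, hM⟩ := hX.exists_bound_of_continuousOn hF.1
  refine RMem.of_forall_approx fun ε hε => ?_
  obtain ⟨n, w, hpoles, happrox⟩ := exists_pow_div_pow_add_pow_approx_indicator_ball
    hX.isClosed ha hab hint (div_pos hε (by positivity : 0 < |M| + 1))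
  refine ⟨fun ζ => w ^ n / ((ζ - x) ^ n + w ^ n) * F ζ,
    (rMem_pow_div_pow_add_pow hpoles).mul hX hF, fun ζ hζ => ?_⟩
  by_cases hζK : dist ζ x ∈ Icc a b
  · have hFζ : F ζ = 0 := hF0 ⟨hζ, hζK⟩
    simpa [indicator_apply_eq_zero.2 fun _ => hFζ, hFζ] using hε
  have hfactor : (ball x b).indicator F ζ - w ^ n / ((ζ - x) ^ n + w ^ n) * F ζ =
      ((ball x b).indicator 1 ζ - w ^ n / ((ζ - x) ^ n + w ^ n)) * F ζ := by
    by_cases hζb : ζ ∈ ball x b <;> simp [hζb, sub_mul]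
  calc _ = ‖(ball x b).indicator 1 ζ - w ^ n / ((ζ - x) ^ n + w ^ n)‖ * ‖F ζ‖ := by
        rw [hfactor, norm_mul]
    _ ≤ ε / (|M| + 1) * |M| :=
        mul_le_mul (happrox ζ hζ hζK).le ((hM ζ hζ).trans (le_abs_self M)) (norm_nonneg _)
          (by positivity)
    _ < ε := by
        rw [div_mul_eq_mul_div, div_lt_iff₀ (by positivity)]
        nlinarith

section RPoints

variable {X : Set ℂ}

theorem interior_inter_eq_empty_of_forall_rPoint {W : Set ℂ}
    (h : ∀ z ∈ X ∩ W, RPoint X z) : interior (X ∩ W) = ∅ := by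
  refine eq_empty_of_forall_notMem fun c hc => ?_
  obtain ⟨τ, hτ, hball⟩ := Metric.isOpen_iff.1 isOpen_interior c hc
  have hballX : ball c τ ⊆ X := fun z hz => (interior_subset (hball hz)).1
  obtain ⟨z, hz, hzc⟩ : ∃ z ∈ ball c τ, z ≠ c := by
    refine ⟨c + (τ / 2 : ℝ), ?_, ?_⟩
    · rw [mem_ball, dist_eq_norm, add_sub_cancel_left, Complex.norm_real, Real.norm_eq_abs,
        abs_of_pos (half_pos hτ)]
      exact half_lt_self hτ
    · simpa using hτ.ne'
  obtain ⟨f, ⟨hf, V, hV, hcV, hf0⟩, hfz⟩ :=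
    not_subset.1 (h c (interior_subset hc) z (hballX hz) hzc)
  have hloc : f =ᶠ[𝓝 c] 0 := by
    filter_upwards [hV.mem_nhds hcV, ball_mem_nhds c hτ] with w hwV hwb
    exact hf0 w ⟨hballX hwb, hwV⟩
  have hfball := ((hf.differentiableOn isOpen_ball hballX).analyticOnNhd isOpen_ball)
    |>.eqOn_zero_of_preconnected_of_eventuallyEq_zero (convex_ball c τ).isPreconnected
      (mem_ball_self hτ) hloc
  exact hfz ⟨hf, hfball hz⟩

theorem IsCompact.exists_rMem_ne_zero_eqOn_zero (hX : IsCompact X) {K : Set ℂ}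
    (hK : IsCompact K) {x : ℂ} (hx : x ∈ X) (hxK : x ∉ K) (h : ∀ z ∈ K, RPoint X z) :
    ∃ F, RMem X F ∧ F x ≠ 0 ∧ EqOn F 0 (X ∩ K) := by
  refine hK.induction_on (p := fun s => ∃ F, RMem X F ∧ F x ≠ 0 ∧ EqOn F 0 (X ∩ s))
    ⟨1, rMem_one, one_ne_zero, by simp⟩ ?_ ?_ ?_
  · rintro s t hst ⟨F, hF, hFx, hF0⟩
    exact ⟨F, hF, hFx, hF0.mono (inter_subset_inter_right X hst)⟩
  · rintro s t ⟨F, hF, hFx, hF0⟩ ⟨G, hG, hGx, hG0⟩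
    refine ⟨F * G, hF.mul hX hG, mul_ne_zero hFx hGx, ?_⟩
    rintro z ⟨hzX, hz | hz⟩
    · simp [hF0 ⟨hzX, hz⟩]
    · simp [hG0 ⟨hzX, hz⟩]
  · intro z hz
    obtain ⟨F, ⟨hF, V, hV, hzV, hF0⟩, hFx⟩ :=
      not_subset.1 (h z hz x hx (ne_of_mem_of_not_mem hz hxK).symm)
    exact ⟨V, mem_nhdsWithin_of_mem_nhds (hV.mem_nhds hzV), F, hF,
      fun hFx0 => hFx ⟨hF, hFx0⟩, hF0⟩

end RPoints

theorem rpoints_near_give_point_of_continuity_general (X : Set ℂ) (hXc : IsCompact X)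
    (x : ℂ) (hx : x ∈ X)
    (U : Set ℂ) (hU : IsOpen U) (hxU : x ∈ U)
    (h : ∀ y ∈ X ∩ U, y ≠ x → RPoint X y) :
    PointOfContinuity X x := by
  intro y hyX hyx hJ
  by_cases hyU : y ∈ U
  · exact h y ⟨hyX, hyU⟩ hyx x hx (Ne.symm hyx) hJ
  obtain ⟨r, hr, hrU⟩ := Metric.isOpen_iff.1 hU x hxU
  have hshell : ∀ z ∈ X, dist z x ∈ Icc (r / 4) (r / 2) → RPoint X z := fun z hzX hz =>
    h z ⟨hzX, hrU (mem_ball.2 (by linarith [hz.2]))⟩ fun hzx => by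
      subst hzx; linarith [hz.1, dist_self z]
  obtain ⟨F, hF, hFx, hF0⟩ := hXc.exists_rMem_ne_zero_eqOn_zero
    (hXc.inter_right (isClosed_Icc.preimage (continuous_id.dist continuous_const))) hx
    (fun hxK => (hxK.2.1.trans_eq (dist_self x)).not_gt (by positivity))
    fun z hz => hshell z hz.1 hz.2
  have hint : interior (X ∩ {z | dist z x ∈ Ioo (r / 4) (r / 2)}) = ∅ :=
    interior_inter_eq_empty_of_forall_rPoint fun z hz =>
      hshell z hz.1 (Ioo_subset_Icc_self hz.2)
  have hg := hF.indicator_ball hXc (by positivity) (by linarith) hint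
    (hF0.mono (subset_inter inter_subset_left subset_rfl))
  have hy : y ∉ closedBall x (r / 2) := fun hy =>
    hyU (hrU (closedBall_subset_ball (by linarith) hy))
  have hgM := hJ ⟨hg, (closedBall x (r / 2))ᶜ, isClosed_closedBall.isOpen_compl, hy,
    fun z hz => indicator_of_notMem (fun hb => hz.2 (ball_subset_closedBall hb)) F⟩
  exact hFx (by simpa [indicator_of_mem (mem_ball_self (half_pos hr))] using hgM.2)

/-- (The positive answer to Question 5.1 of the paper for `R(X)`.)  If there is an open
neighbourhood `U` of `x` in `X` such that every point of `U \ {x}` is an R-point for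
`R(X)`, then `x` is a point of continuity for `R(X)`. -/
theorem rpoints_near_give_point_of_continuity (X : Set ℂ) (hXc : IsCompact X)
    (hXne : X.Nonempty) (x : ℂ) (hx : x ∈ X)
    (U : Set ℂ) (hU : IsOpen U) (hxU : x ∈ U)
    (h : ∀ y ∈ X ∩ U, y ≠ x → RPoint X y) :
    PointOfContinuity X x :=
  rpoints_near_give_point_of_continuity_general X hXc x hx U hU hxU h
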